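/- Correctness of the separation condition (one direction): if the optimal value V of the separation problem SEP is 0, then the jamming solution is robust, i.e., for every band-assignment w feasible for the RHS-multiband set and every jammed testpoint t ∈ T', the realized SIR balance Δ̄SIR_t + Σ_{k∈K} d_t^k·w_t^k is strictly less than the received jamming power JAM_t. -/

import Mathlib

theorem sep_value_zero_implies_robust_general {α K : Type*} [Fintype K]
    (T' : Finset α) (ΔSIRbar JAM : α → ℝ) (d : α → K → ℝ) (l u : K → ℕ)
    (hV : ∀ v : α → ℝ, ∀ w : α → K → ℝ,
      (∀ t, v t = 0 ∨ v t = 1) →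
      (∀ t k, w t k = 0 ∨ w t k = 1) →
      (∀ t ∈ T', ∑ k, w t k ≤ 1) →
      (∀ k, (l k : ℝ) ≤ ∑ t ∈ T', w t k ∧ ∑ t ∈ T', w t k ≤ (u k : ℝ)) →
      (∀ t ∈ T', v t = 1 → ∑ k, d t k * w t k ≥ JAM t - ΔSIRbar t) →
      ∑ t ∈ T', v t = 0) :
    ∀ w : α → K → ℝ,
      (∀ t k, w t k = 0 ∨ w t k = 1) →
      (∀ t ∈ T', ∑ k, w t k ≤ 1) →
      (∀ k, (l k : ℝ) ≤ ∑ t ∈ T', w t k ∧ ∑ t ∈ T', w t k ≤ (u k : ℝ)) →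
      ∀ t ∈ T', ΔSIRbar t + ∑ k, d t k * w t k < JAM t := by
  classical
  intro w hw01 hwrow hwcol t₀ ht₀
  by_contra! hviol
  -- Selecting only the violated testpoint `t₀` gives a feasible SEP solution of value 1.
  have hvalue := hV (Pi.single t₀ 1) w (fun t => ?_) hw01 hwrow hwcol (fun t _ hv => ?_)
  · simp [Finset.sum_pi_single', ht₀] at hvalue
  · rcases eq_or_ne t t₀ with rfl | ht <;> simp [*]
  · obtain rfl : t = t₀ := by by_contra ht; simp [ht] at hv
    linarith

/-- Correctness of the separation condition (one direction): if the optimal value of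
SEP is 0, then the jamming solution is robust. -/
theorem sep_value_zero_implies_robust {α K : Type*} [Fintype α] [Fintype K]
    (T' : Finset α) (ΔSIRbar JAM : α → ℝ) (d : α → K → ℝ) (l u : K → ℕ)
    (hnom : ∀ t ∈ T', JAM t > ΔSIRbar t)
    (hV : ∀ v : α → ℝ, ∀ w : α → K → ℝ,
      (∀ t, v t = 0 ∨ v t = 1) →
      (∀ t k, w t k = 0 ∨ w t k = 1) →
      (∀ t ∈ T', ∑ k, w t k ≤ 1) →
      (∀ k, (l k : ℝ) ≤ ∑ t ∈ T', w t k ∧ ∑ t ∈ T', w t k ≤ (u k : ℝ)) →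
      (∀ t ∈ T', v t = 1 → ∑ k, d t k * w t k ≥ JAM t - ΔSIRbar t) →
      ∑ t ∈ T', v t = 0) :
    ∀ w : α → K → ℝ,
      (∀ t k, w t k = 0 ∨ w t k = 1) →
      (∀ t ∈ T', ∑ k, w t k ≤ 1) →
      (∀ k, (l k : ℝ) ≤ ∑ t ∈ T', w t k ∧ ∑ t ∈ T', w t k ≤ (u k : ℝ)) →
      ∀ t ∈ T', ΔSIRbar t + ∑ k, d t k * w t k < JAM t :=
  sep_value_zero_implies_robust_general T' ΔSIRbar JAM d l u hV
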